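/- arXiv:1903.12232 — 2 statements merged into one kernel-verified Lean document; each statement's English description precedes it below -/
import Mathlib

section
/- Let α > 0, ξ > 0 with α ≠ ξ. If (y, z) : ℝ → ℝ² is a differentiable solution of the reduced problem ẏ = e^z − 1, ż = ξ + e^z(αz − ξy − ξ) that is periodic with some period T > 0, then (y, z) is constant and equal to (0, 0). In particular, for α ≠ ξ the reduced problem has no limit cycles. -/
/-!
Along a solution, `H(y,z) = −ξ e^{−ξy}(y − z + 1 − e^{−z}) + 1 − e^{−ξy}` has derivative
`ξ e^{−ξy}(e^z − 1) z (α − ξ)`, whose sign is that of `α − ξ` and which vanishes only where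
`z = 0`. Hence `H / (α − ξ)` is monotone along the solution; being also `T`-periodic it is
constant, so `z ≡ 0`, and then `ż = 0` forces `y ≡ 0`.
-/

open Real Function

theorem Function.Periodic.eq_of_monotone {α β : Type*} [AddCommGroup α] [LinearOrder α]
    [IsOrderedAddMonoid α] [Archimedean α] [PartialOrder β] {f : α → β} {T : α}
    (hp : Periodic f T) (hT : 0 < T) (hf : Monotone f) (x : α) : f x = f 0 := by
  obtain ⟨u, ⟨hu₀, huT⟩, hfu⟩ := hp.exists_mem_Ico₀ hT x
  refine hfu.trans (le_antisymm ?_ (hf hu₀))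
  simpa [hp.eq] using hf huT.le

theorem Function.Periodic.hasDerivAt_eq_zero_of_nonneg {f f' : ℝ → ℝ} {T : ℝ}
    (hp : Periodic f T) (hT : 0 < T) (hf : ∀ t, HasDerivAt f (f' t) t) (hf' : ∀ t, 0 ≤ f' t)
    (t : ℝ) : f' t = 0 := by
  have hconst : f = fun _ => f 0 :=
    funext (hp.eq_of_monotone hT (monotone_of_hasDerivAt_nonneg hf hf'))
  exact (hf t).unique (hconst ▸ hasDerivAt_const t (f 0))

theorem Real.exp_sub_one_mul_self_nonneg (x : ℝ) : 0 ≤ (exp x - 1) * x := by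
  rcases le_or_gt 0 x with hx | hx
  · exact mul_nonneg (by linarith [one_le_exp hx]) hx
  · exact mul_nonneg_of_nonpos_of_nonpos (by linarith [exp_lt_one_iff.2 hx]) hx.le

theorem Real.exp_sub_one_mul_self_eq_zero_iff {x : ℝ} : (exp x - 1) * x = 0 ↔ x = 0 := by
  refine ⟨fun h => ?_, fun h => by simp [h]⟩
  rcases mul_eq_zero.1 h with h | h
  · exact exp_eq_one_iff x |>.1 (sub_eq_zero.1 h)
  · exact h

noncomputable def lyapunov (ξ y z : ℝ) : ℝ :=
  -ξ * exp (-ξ * y) * (y - z + 1 - exp (-z)) + 1 - exp (-ξ * y)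

theorem hasDerivAt_lyapunov {α ξ : ℝ} {y z : ℝ → ℝ} {t : ℝ}
    (hy : HasDerivAt y (exp (z t) - 1) t)
    (hz : HasDerivAt z (ξ + exp (z t) * (α * z t - ξ * y t - ξ)) t) :
    HasDerivAt (fun s => lyapunov ξ (y s) (z s))
      (ξ * exp (-ξ * y t) * ((exp (z t) - 1) * z t) * (α - ξ)) t := by
  have hE := (hy.const_mul (-ξ)).exp
  have h :=
    (((hE.const_mul (-ξ)).mul (((hy.sub hz).add_const 1).sub hz.neg.exp)).add_const 1).sub hE
  refine h.congr_deriv ?_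
  simp only [Pi.sub_apply, Pi.neg_apply, exp_neg]
  field_simp
  ring

theorem stmt_3_general (α ξ : ℝ) (hξ : 0 < ξ) (hne : α ≠ ξ)
    (y z : ℝ → ℝ)
    (hy : ∀ t : ℝ, HasDerivAt y (Real.exp (z t) - 1) t)
    (hz : ∀ t : ℝ, HasDerivAt z (ξ + Real.exp (z t) * (α * z t - ξ * y t - ξ)) t)
    (T : ℝ) (hT : 0 < T)
    (hper : ∀ t : ℝ, y (t + T) = y t ∧ z (t + T) = z t) :
    ∀ t : ℝ, y t = 0 ∧ z t = 0 := by
  set V : ℝ → ℝ := fun t => lyapunov ξ (y t) (z t) / (α - ξ)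
  have hV (t : ℝ) : HasDerivAt V (ξ * exp (-ξ * y t) * ((exp (z t) - 1) * z t)) t := by
    have h := (hasDerivAt_lyapunov (hy t) (hz t)).div_const (α - ξ)
    rwa [mul_div_cancel_right₀ _ (sub_ne_zero.2 hne)] at h
  have hV_nonneg (t : ℝ) : 0 ≤ ξ * exp (-ξ * y t) * ((exp (z t) - 1) * z t) :=
    mul_nonneg (by positivity) (exp_sub_one_mul_self_nonneg _)
  have hV_periodic : Periodic V T := fun t => by simp only [V, (hper t).1, (hper t).2]
  have hz_zero (t : ℝ) : z t = 0 := by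
    have h := hV_periodic.hasDerivAt_eq_zero_of_nonneg hT hV hV_nonneg t
    exact exp_sub_one_mul_self_eq_zero_iff.1 ((mul_eq_zero.1 h).resolve_left (by positivity))
  intro t
  have hz' := (hz t).unique ((funext hz_zero : z = fun _ => 0) ▸ hasDerivAt_const t 0)
  rw [hz_zero t, exp_zero] at hz'
  exact ⟨by nlinarith, hz_zero t⟩

/-- For `α ≠ ξ` the reduced problem `ẏ = e^z − 1`, `ż = ξ + e^z(αz − ξy − ξ)` has
no limit cycles: every globally defined periodic solution is the constant
equilibrium `(0,0)`. -/
theorem stmt_3 (α ξ : ℝ) (hα : 0 < α) (hξ : 0 < ξ) (hne : α ≠ ξ)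
    (y z : ℝ → ℝ)
    (hy : ∀ t : ℝ, HasDerivAt y (Real.exp (z t) - 1) t)
    (hz : ∀ t : ℝ, HasDerivAt z (ξ + Real.exp (z t) * (α * z t - ξ * y t - ξ)) t)
    (T : ℝ) (hT : 0 < T)
    (hper : ∀ t : ℝ, y (t + T) = y t ∧ z (t + T) = z t) :
    ∀ t : ℝ, y t = 0 ∧ z t = 0 :=
  stmt_3_general α ξ hξ hne y z hy hz T hT hper
end

section
/- Let ξ > 0 and let χ : ℝ → ℝ be defined by χ(0) = −1 and χ(p) = −√(√(4p² + 1) − 1)/(√2 · |p|) for p ≠ 0. For all ρ > 0, ϱ > 0 and (a, b) ∈ ℝ² with a² + b² = 1, a < 0, b > 0, set S = √(1 + ϱ²a² + ϱ⁴b²). Then there exist unique σ > 0, π > 0 and (u, v) ∈ ℝ² with u² + v² = 1, u > 0, v > 0, such that ρϱa/S = σ·χ(πu), ρϱ²b/S = σ²·χ(πu)²·πu, and πv = S/ρ. Consequently, for every r ≥ 0 one also has r/√(1 + ρ²/S²) = r·πv/√(1 + π²v²) and r·ρ/(S·√(1 + ρ²/S²)) = r/√(1 + π²v²); i.e., the blowup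 maps satisfy Ψ¹²³(y, r, ρ, ϱ, (a,b)) = Ψ^{14a4b}(y, r, σ, π, (u,v)) for all y ∈ ℝ and r ≥ 0, and the transition map M : (ρ, ϱ, (a,b)) ↦ (σ, π, (u,v)) is injective. -/
/-- The function `χ` parametrizing the negative solution branch of `c² + c⁴p² = 1`. -/
noncomputable def chi (p : ℝ) : ℝ :=
  if p = 0 then -1 else -Real.sqrt (Real.sqrt (4 * p ^ 2 + 1) - 1) / (Real.sqrt 2 * |p|)

lemma chi_neg (p : ℝ) : chi p < 0 := by
  unfold chi
  split_ifs with h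
  · norm_num
  · have h1 : 0 < Real.sqrt (4 * p ^ 2 + 1) - 1 := by
      have : (1:ℝ) < Real.sqrt (4 * p ^ 2 + 1) := by
        have hp : (1:ℝ) < 4 * p ^ 2 + 1 := by
          have := pow_pos (abs_pos.mpr h) 2
          nlinarith [sq_abs p]
        calc (1:ℝ) = Real.sqrt 1 := by simp
        _ < Real.sqrt (4 * p ^ 2 + 1) := Real.sqrt_lt_sqrt (by norm_num) hp
      linarith
    have h2 : 0 < Real.sqrt (Real.sqrt (4 * p ^ 2 + 1) - 1) := Real.sqrt_pos.mpr h1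
    have h3 : 0 < Real.sqrt 2 * |p| := by
      have := abs_pos.mpr h
      positivity
    exact div_neg_of_neg_of_pos (by linarith) h3

lemma chi_sq (p : ℝ) (h : p ≠ 0) :
    chi p ^ 2 = (Real.sqrt (4 * p ^ 2 + 1) - 1) / (2 * p ^ 2) := by
  unfold chi
  rw [if_neg h]
  have h1 : (1:ℝ) ≤ Real.sqrt (4 * p ^ 2 + 1) := by
    have := Real.sqrt_le_sqrt (show (1:ℝ) ≤ 4 * p ^ 2 + 1 by nlinarith [sq_nonneg p])
    rwa [Real.sqrt_one] at this
  have e : (-Real.sqrt (Real.sqrt (4 * p ^ 2 + 1) - 1) / (Real.sqrt 2 * |p|)) ^ 2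
      = (Real.sqrt (Real.sqrt (4 * p ^ 2 + 1) - 1)) ^ 2 / ((Real.sqrt 2) ^ 2 * |p| ^ 2) := by
    ring
  rw [e, Real.sq_sqrt (by linarith), Real.sq_sqrt (by norm_num : (0:ℝ) ≤ 2), sq_abs]

lemma chi_eq (p : ℝ) : chi p ^ 2 + chi p ^ 4 * p ^ 2 = 1 := by
  by_cases h : p = 0
  · subst h; unfold chi; norm_num
  · have hs : (Real.sqrt (4 * p ^ 2 + 1)) ^ 2 = 4 * p ^ 2 + 1 :=
      Real.sq_sqrt (by positivity)
    have ht := chi_sq p h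
    rw [show chi p ^ 4 = (chi p ^ 2) ^ 2 by ring, ht]
    have hp2 : p ^ 2 ≠ 0 := pow_ne_zero _ h
    field_simp
    nlinarith [hs]

lemma chi_unique (p c : ℝ) (hc : c < 0) (h : c ^ 2 + c ^ 4 * p ^ 2 = 1) : c = chi p := by
  have h2 := chi_eq p
  have key : (c ^ 2 - chi p ^ 2) * (1 + p ^ 2 * (c ^ 2 + chi p ^ 2)) = 0 := by
    linear_combination h - h2
  have hpos : 0 < 1 + p ^ 2 * (c ^ 2 + chi p ^ 2) := by positivity
  have hsq : c ^ 2 = chi p ^ 2 := by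
    rcases mul_eq_zero.mp key with h' | h'
    · linarith
    · linarith
  have hfac : (c - chi p) * (c + chi p) = 0 := by linear_combination hsq
  rcases mul_eq_zero.mp hfac with h' | h'
  · linarith
  · have := chi_neg p; linarith

lemma root_unique (A B t s : ℝ) (hB : 0 < B) (ht : 0 < t) (hs : 0 < s)
    (h1 : t ^ 2 = t * A + B) (h2 : s ^ 2 = s * A + B) : t = s := by
  have hA1 : A < t := by nlinarith
  have hA2 : A < s := by nlinarith
  have key : (t - s) * (t + s - A) = 0 := by linear_combination h1 - h2
  rcases mul_eq_zero.mp key with h | h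
  · linarith
  · linarith

lemma pos_sq_inj (x y : ℝ) (hx : 0 < x) (hy : 0 < y) (h : x ^ 2 = y ^ 2) : x = y := by
  have key : (x - y) * (x + y) = 0 := by linear_combination h
  rcases mul_eq_zero.mp key with h' | h' <;> linarith

lemma r_match (ρ S π v r : ℝ) (hρ : 0 < ρ) (hS : 0 < S) (hπ : 0 < π) (hv : 0 < v)
    (h : π * v = S / ρ) :
    r / Real.sqrt (1 + ρ ^ 2 / S ^ 2) = r * π * v / Real.sqrt (1 + π ^ 2 * v ^ 2) ∧
    r * ρ / (S * Real.sqrt (1 + ρ ^ 2 / S ^ 2)) = r / Real.sqrt (1 + π ^ 2 * v ^ 2) := by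
  have hpvr : π * v * ρ = S := by
    rw [h]; field_simp
  have e1 : Real.sqrt (1 + ρ ^ 2 / S ^ 2) * S = Real.sqrt (S ^ 2 + ρ ^ 2) := by
    rw [show S = Real.sqrt (S ^ 2) from (Real.sqrt_sq hS.le).symm]
    rw [← Real.sqrt_mul (by positivity)]
    rw [Real.sqrt_sq hS.le]
    congr 1
    field_simp
  have e2 : Real.sqrt (1 + π ^ 2 * v ^ 2) * ρ = Real.sqrt (S ^ 2 + ρ ^ 2) := by
    rw [show ρ = Real.sqrt (ρ ^ 2) from (Real.sqrt_sq hρ.le).symm]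
    rw [← Real.sqrt_mul (by positivity)]
    rw [Real.sqrt_sq hρ.le]
    congr 1
    nlinarith [hpvr]
  have hP : 0 < Real.sqrt (1 + ρ ^ 2 / S ^ 2) := Real.sqrt_pos.mpr (by positivity)
  have hQ : 0 < Real.sqrt (1 + π ^ 2 * v ^ 2) := Real.sqrt_pos.mpr (by positivity)
  constructor
  · rw [div_eq_div_iff hP.ne' hQ.ne']
    apply mul_left_cancel₀ hρ.ne'
    linear_combination r * e2 - r * e1 - r * Real.sqrt (1 + ρ ^ 2 / S ^ 2) * hpvr
  · rw [div_eq_div_iff (by positivity) hQ.ne']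
    linear_combination r * e2 - r * e1

lemma aux_exists (X W q : ℝ) (hX : X < 0) (hW : 0 < W) (hq : 0 < q) :
    ∃ σ π u v : ℝ,
      (0 < σ ∧ 0 < π ∧ u ^ 2 + v ^ 2 = 1 ∧ 0 < u ∧ 0 < v ∧
        X = σ * chi (π * u) ∧ W = σ ^ 2 * chi (π * u) ^ 2 * (π * u) ∧ π * v = q) ∧
      (∀ σ' π' u' v' : ℝ,
        (0 < σ' ∧ 0 < π' ∧ u' ^ 2 + v' ^ 2 = 1 ∧ 0 < u' ∧ 0 < v' ∧
          X = σ' * chi (π' * u') ∧ W = σ' ^ 2 * chi (π' * u') ^ 2 * (π' * u') ∧ π' * v' = q) →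
        σ' = σ ∧ π' = π ∧ u' = u ∧ v' = v) := by
  have hX0 : X ≠ 0 := hX.ne
  have hX2 : 0 < X ^ 2 := by nlinarith
  obtain ⟨D, hD2, hD0⟩ : ∃ D : ℝ, D ^ 2 = X ^ 4 + 4 * W ^ 2 ∧ 0 ≤ D :=
    ⟨Real.sqrt (X ^ 4 + 4 * W ^ 2), Real.sq_sqrt (by positivity), Real.sqrt_nonneg _⟩
  have hDX : X ^ 2 < D := by nlinarith [pow_pos hW 2]
  obtain ⟨t, ht, htq⟩ : ∃ t : ℝ, 0 < t ∧ t ^ 2 = t * X ^ 2 + W ^ 2 :=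
    ⟨(X ^ 2 + D) / 2, by nlinarith, by linear_combination hD2 / 4⟩
  obtain ⟨σ, hσ, hσ2⟩ : ∃ σ : ℝ, 0 < σ ∧ σ ^ 2 = t :=
    ⟨Real.sqrt t, Real.sqrt_pos.mpr ht, Real.sq_sqrt ht.le⟩
  obtain ⟨p, hp, hpw⟩ : ∃ p : ℝ, 0 < p ∧ X ^ 2 * p = W :=
    ⟨W / X ^ 2, div_pos hW hX2, by field_simp⟩
  obtain ⟨π, hπ, hπ2⟩ : ∃ π : ℝ, 0 < π ∧ π ^ 2 = p ^ 2 + q ^ 2 :=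
    ⟨Real.sqrt (p ^ 2 + q ^ 2), Real.sqrt_pos.mpr (by positivity),
      Real.sq_sqrt (by positivity)⟩
  obtain ⟨u, v, hu, hv, hπu, hπv⟩ :
      ∃ u v : ℝ, 0 < u ∧ 0 < v ∧ π * u = p ∧ π * v = q :=
    ⟨p / π, q / π, by positivity, by positivity, by field_simp, by field_simp⟩
  have huv : u ^ 2 + v ^ 2 = 1 := by
    have h1 : (π * u) ^ 2 + (π * v) ^ 2 = π ^ 2 := by rw [hπu, hπv, hπ2]
    have h2 : π ^ 2 * (u ^ 2 + v ^ 2) = π ^ 2 * 1 := by linear_combination h1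
    exact mul_left_cancel₀ (pow_ne_zero 2 hπ.ne') h2
  have hσ4 : σ ^ 4 = X ^ 2 * σ ^ 2 + X ^ 4 * p ^ 2 :=
    calc σ ^ 4 = (σ ^ 2) ^ 2 := by ring
      _ = t ^ 2 := by rw [hσ2]
      _ = t * X ^ 2 + W ^ 2 := htq
      _ = X ^ 2 * σ ^ 2 + X ^ 4 * p ^ 2 := by rw [← hσ2, ← hpw]; ring
  have hc : X / σ < 0 := div_neg_of_neg_of_pos hX hσ
  have hceq : (X / σ) ^ 2 + (X / σ) ^ 4 * p ^ 2 = 1 := by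
    have e : (X / σ) ^ 2 + (X / σ) ^ 4 * p ^ 2 = (X ^ 2 * σ ^ 2 + X ^ 4 * p ^ 2) / σ ^ 4 := by
      field_simp
    rw [e, ← hσ4, div_self (by positivity)]
  have hchi : chi p = X / σ := (chi_unique p (X / σ) hc hceq).symm
  refine ⟨σ, π, u, v, ⟨hσ, hπ, huv, hu, hv, ?_, ?_, hπv⟩, ?_⟩
  · rw [hπu, hchi]
    field_simp
  · rw [hπu, hchi, ← hpw]
    field_simp
  · rintro σ' π' u' v' ⟨hσ', hπ', huv', hu', hv', e1, e2, e3⟩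
    have hce := chi_eq (π' * u')
    have hσ'4 : (σ' ^ 2) ^ 2 = σ' ^ 2 * X ^ 2 + W ^ 2 := by
      rw [show X ^ 2 = σ' ^ 2 * chi (π' * u') ^ 2 by rw [e1]; ring, e2]
      linear_combination (-σ' ^ 4) * hce
    have hσq : (σ ^ 2) ^ 2 = σ ^ 2 * X ^ 2 + W ^ 2 := by
      rw [hσ2]
      linear_combination htq
    have hσσ : σ' ^ 2 = σ ^ 2 :=
      root_unique (X ^ 2) (W ^ 2) (σ' ^ 2) (σ ^ 2) (pow_pos hW 2)
        (pow_pos hσ' 2) (pow_pos hσ 2) hσ'4 hσq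
    have hσeq : σ' = σ := pos_sq_inj _ _ hσ' hσ hσσ
    rw [hσeq] at e1 e2
    have hcc : chi (π' * u') = X / σ := by
      rw [e1, mul_div_cancel_left₀ _ hσ.ne']
    have hWe : X ^ 2 * (π' * u') = W := by
      rw [e2, hcc]
      field_simp
    have hpu2 : π' * u' = p := by
      apply mul_left_cancel₀ (pow_ne_zero 2 hX0)
      rw [hWe, hpw]
    have hπ'2 : π' ^ 2 = p ^ 2 + q ^ 2 := by
      calc π' ^ 2 = (π' * u') ^ 2 + (π' * v') ^ 2 := by
            linear_combination (-π' ^ 2) * huv'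
        _ = p ^ 2 + q ^ 2 := by rw [hpu2, e3]
    have hπeq : π' = π := pos_sq_inj _ _ hπ' hπ (hπ'2.trans hπ2.symm)
    refine ⟨hσeq, hπeq, ?_, ?_⟩
    · apply mul_left_cancel₀ hπ.ne'
      rw [← hπeq, hpu2, ← hπu, hπeq]
    · apply mul_left_cancel₀ hπ.ne'
      rw [← hπeq, e3, ← hπv, hπeq]

/-- Matching of the blowup charts `Ψ¹²³` and `Ψ^{14a4b}`: for every admissible
`(ρ, ϱ, (a,b))` there exist unique `(σ, π, (u,v))` with `σ, π > 0`, `u, v > 0`,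
`u² + v² = 1` satisfying `ρϱa/S = σχ(πu)`, `ρϱ²b/S = σ²χ(πu)²πu`, `πv = S/ρ`;
consequently the `q`- and `ε`-components of the two blowup maps agree for every
`r ≥ 0`, and the transition map `M : (ρ,ϱ,(a,b)) ↦ (σ,π,(u,v))` is injective. -/
theorem stmt_13 (ξ : ℝ) (hξ : 0 < ξ)
    (ρ ϱ a b S : ℝ) (hρ : 0 < ρ) (hϱ : 0 < ϱ)
    (hab : a ^ 2 + b ^ 2 = 1) (ha : a < 0) (hb : 0 < b)
    (hS : S = Real.sqrt (1 + ϱ ^ 2 * a ^ 2 + ϱ ^ 4 * b ^ 2)) :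
    (∃ σ π u v : ℝ,
      (0 < σ ∧ 0 < π ∧ u ^ 2 + v ^ 2 = 1 ∧ 0 < u ∧ 0 < v ∧
        ρ * ϱ * a / S = σ * chi (π * u) ∧
        ρ * ϱ ^ 2 * b / S = σ ^ 2 * chi (π * u) ^ 2 * (π * u) ∧
        π * v = S / ρ) ∧
      (∀ σ' π' u' v' : ℝ,
        (0 < σ' ∧ 0 < π' ∧ u' ^ 2 + v' ^ 2 = 1 ∧ 0 < u' ∧ 0 < v' ∧
          ρ * ϱ * a / S = σ' * chi (π' * u') ∧
          ρ * ϱ ^ 2 * b / S = σ' ^ 2 * chi (π' * u') ^ 2 * (π' * u') ∧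
          π' * v' = S / ρ) →
        σ' = σ ∧ π' = π ∧ u' = u ∧ v' = v) ∧
      (∀ r : ℝ, 0 ≤ r →
        r / Real.sqrt (1 + ρ ^ 2 / S ^ 2) = r * π * v / Real.sqrt (1 + π ^ 2 * v ^ 2) ∧
        r * ρ / (S * Real.sqrt (1 + ρ ^ 2 / S ^ 2)) = r / Real.sqrt (1 + π ^ 2 * v ^ 2))) ∧
    (∀ ρ₁ ϱ₁ a₁ b₁ ρ₂ ϱ₂ a₂ b₂ σ π u v : ℝ,
      0 < ρ₁ → 0 < ϱ₁ → a₁ ^ 2 + b₁ ^ 2 = 1 → a₁ < 0 → 0 < b₁ →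
      0 < ρ₂ → 0 < ϱ₂ → a₂ ^ 2 + b₂ ^ 2 = 1 → a₂ < 0 → 0 < b₂ →
      0 < σ → 0 < π → u ^ 2 + v ^ 2 = 1 → 0 < u → 0 < v →
      (ρ₁ * ϱ₁ * a₁ / Real.sqrt (1 + ϱ₁ ^ 2 * a₁ ^ 2 + ϱ₁ ^ 4 * b₁ ^ 2) = σ * chi (π * u) ∧
        ρ₁ * ϱ₁ ^ 2 * b₁ / Real.sqrt (1 + ϱ₁ ^ 2 * a₁ ^ 2 + ϱ₁ ^ 4 * b₁ ^ 2) =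
          σ ^ 2 * chi (π * u) ^ 2 * (π * u) ∧
        π * v = Real.sqrt (1 + ϱ₁ ^ 2 * a₁ ^ 2 + ϱ₁ ^ 4 * b₁ ^ 2) / ρ₁) →
      (ρ₂ * ϱ₂ * a₂ / Real.sqrt (1 + ϱ₂ ^ 2 * a₂ ^ 2 + ϱ₂ ^ 4 * b₂ ^ 2) = σ * chi (π * u) ∧
        ρ₂ * ϱ₂ ^ 2 * b₂ / Real.sqrt (1 + ϱ₂ ^ 2 * a₂ ^ 2 + ϱ₂ ^ 4 * b₂ ^ 2) =
          σ ^ 2 * chi (π * u) ^ 2 * (π * u) ∧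
        π * v = Real.sqrt (1 + ϱ₂ ^ 2 * a₂ ^ 2 + ϱ₂ ^ 4 * b₂ ^ 2) / ρ₂) →
      ρ₁ = ρ₂ ∧ ϱ₁ = ϱ₂ ∧ a₁ = a₂ ∧ b₁ = b₂) := by
  constructor
  · have hS0 : 0 < S := by rw [hS]; exact Real.sqrt_pos.mpr (by positivity)
    have hX : ρ * ϱ * a / S < 0 :=
      div_neg_of_neg_of_pos (by nlinarith [mul_pos hρ hϱ]) hS0
    have hW : 0 < ρ * ϱ ^ 2 * b / S := div_pos (by positivity) hS0
    have hq : 0 < S / ρ := div_pos hS0 hρ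
    obtain ⟨σ, π, u, v, hprop, huniq⟩ :=
      aux_exists (ρ * ϱ * a / S) (ρ * ϱ ^ 2 * b / S) (S / ρ) hX hW hq
    obtain ⟨h1, h2, h3, h4, h5, h6, h7, h8⟩ := hprop
    exact ⟨σ, π, u, v, ⟨h1, h2, h3, h4, h5, h6, h7, h8⟩, huniq,
      fun r _ => r_match ρ S π v r hρ hS0 h2 h5 h8⟩
  · intro ρ₁ ϱ₁ a₁ b₁ ρ₂ ϱ₂ a₂ b₂ σ π u v hρ₁ hϱ₁ hab₁ ha₁ hb₁ hρ₂ hϱ₂ hab₂ ha₂ hb₂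
      hσ hπ huv hu hv h1 h2
    obtain ⟨h1a, h1b, h1c⟩ := h1
    obtain ⟨h2a, h2b, h2c⟩ := h2
    set S₁ := Real.sqrt (1 + ϱ₁ ^ 2 * a₁ ^ 2 + ϱ₁ ^ 4 * b₁ ^ 2) with hS₁def
    set S₂ := Real.sqrt (1 + ϱ₂ ^ 2 * a₂ ^ 2 + ϱ₂ ^ 4 * b₂ ^ 2) with hS₂def
    have hS₁ : 0 < S₁ := Real.sqrt_pos.mpr (by positivity)
    have hS₂ : 0 < S₂ := Real.sqrt_pos.mpr (by positivity)
    have hS₁2 : S₁ ^ 2 = 1 + ϱ₁ ^ 2 * a₁ ^ 2 + ϱ₁ ^ 4 * b₁ ^ 2 := Real.sq_sqrt (by positivity)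
    have hS₂2 : S₂ ^ 2 = 1 + ϱ₂ ^ 2 * a₂ ^ 2 + ϱ₂ ^ 4 * b₂ ^ 2 := Real.sq_sqrt (by positivity)
    have hS1e : S₁ = π * v * ρ₁ := by rw [h1c]; field_simp
    have hS2e : S₂ = π * v * ρ₂ := by rw [h2c]; field_simp
    have t1 : ρ₁ * ϱ₁ * a₁ = σ * chi (π * u) * S₁ := (div_eq_iff hS₁.ne').mp h1a
    have t2 : ρ₂ * ϱ₂ * a₂ = σ * chi (π * u) * S₂ := (div_eq_iff hS₂.ne').mp h2a
    have s1 : ρ₁ * ϱ₁ ^ 2 * b₁ = σ ^ 2 * chi (π * u) ^ 2 * (π * u) * S₁ :=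
      (div_eq_iff hS₁.ne').mp h1b
    have s2 : ρ₂ * ϱ₂ ^ 2 * b₂ = σ ^ 2 * chi (π * u) ^ 2 * (π * u) * S₂ :=
      (div_eq_iff hS₂.ne').mp h2b
    rw [hS1e] at t1 s1
    rw [hS2e] at t2 s2
    have u1 : ϱ₁ * a₁ = σ * chi (π * u) * (π * v) := by
      apply mul_left_cancel₀ hρ₁.ne'
      linear_combination t1
    have u2 : ϱ₂ * a₂ = σ * chi (π * u) * (π * v) := by
      apply mul_left_cancel₀ hρ₂.ne'
      linear_combination t2
    have w1 : ϱ₁ ^ 2 * b₁ = σ ^ 2 * chi (π * u) ^ 2 * (π * u) * (π * v) := by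
      apply mul_left_cancel₀ hρ₁.ne'
      linear_combination s1
    have w2 : ϱ₂ ^ 2 * b₂ = σ ^ 2 * chi (π * u) ^ 2 * (π * u) * (π * v) := by
      apply mul_left_cancel₀ hρ₂.ne'
      linear_combination s2
    have hA : ϱ₁ * a₁ = ϱ₂ * a₂ := u1.trans u2.symm
    have hB : ϱ₁ ^ 2 * b₁ = ϱ₂ ^ 2 * b₂ := w1.trans w2.symm
    have hSS : S₁ = S₂ := by
      apply pos_sq_inj _ _ hS₁ hS₂
      rw [hS₁2, hS₂2]
      linear_combination (ϱ₁ * a₁ + ϱ₂ * a₂) * hA + (ϱ₁ ^ 2 * b₁ + ϱ₂ ^ 2 * b₂) * hB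
    have hρρ : ρ₁ = ρ₂ := by
      have h := h1c.symm.trans h2c
      rw [hSS, div_eq_div_iff hρ₁.ne' hρ₂.ne'] at h
      exact (mul_left_cancel₀ hS₂.ne' h).symm
    have q1 : (ϱ₁ ^ 2) ^ 2 = ϱ₁ ^ 2 * (ϱ₁ * a₁) ^ 2 + (ϱ₁ ^ 2 * b₁) ^ 2 := by
      linear_combination (-ϱ₁ ^ 4) * hab₁
    have q2 : (ϱ₂ ^ 2) ^ 2 = ϱ₂ ^ 2 * (ϱ₁ * a₁) ^ 2 + (ϱ₁ ^ 2 * b₁) ^ 2 := by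
      rw [hA, hB]
      linear_combination (-ϱ₂ ^ 4) * hab₂
    have hϱϱ2 : ϱ₁ ^ 2 = ϱ₂ ^ 2 :=
      root_unique ((ϱ₁ * a₁) ^ 2) ((ϱ₁ ^ 2 * b₁) ^ 2) _ _
        (pow_pos (by positivity) 2) (pow_pos hϱ₁ 2) (pow_pos hϱ₂ 2) q1 q2
    have hϱϱ : ϱ₁ = ϱ₂ := pos_sq_inj _ _ hϱ₁ hϱ₂ hϱϱ2
    have haa : a₁ = a₂ := by
      rw [hϱϱ] at hA
      exact mul_left_cancel₀ hϱ₂.ne' hA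
    have hbb : b₁ = b₂ := by
      rw [hϱϱ] at hB
      exact mul_left_cancel₀ (pow_ne_zero 2 hϱ₂.ne') hB
    exact ⟨hρρ, hϱϱ, haa, hbb⟩
end
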